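/- Let 2 ≤ m ≤ d and let e_m denote the elementary symmetric polynomial of degree m in the variables θ₁,…,θ_d. For θ ∈ ℂ^d, all partial derivatives of e_m vanish at θ (i.e. (∂e_m/∂θ_i)(θ) = 0 for all i = 1,…,d) if and only if θ has at most m−2 nonzero coordinates. Consequently, the common zero locus in ℂ^d of the d partial derivatives of e_m is the union of the binom(d, m−2) coordinate subspaces spanned by m−2 of the standard basis vectors. -/

import Mathlib

/-!
Write `θ⁽ⁱ⁾` for `θ` with its `i`-th coordinate replaced by `0`. Splitting the subsets by whether
they contain `i` gives `e_{r+1}(θ) = e_{r+1}(θ⁽ⁱ⁾) + θᵢ e_r(θ⁽ⁱ⁾)` and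
`(∂e_{r+1}/∂θᵢ)(θ) = e_r(θ⁽ⁱ⁾)`; combined with Euler's identity for the homogeneous `e_{r+1}`,
this yields `∑ᵢ e_r(θ⁽ⁱ⁾) = (d - r) e_r(θ)`.

Let `s` be the number of nonzero coordinates of `θ`. If `s < m - 1`, every `e_{m-1}(θ⁽ⁱ⁾)`
vanishes, since each of its monomials contains a zero coordinate. If `s = m - 1 < d`, pick a zero
coordinate `i`: then `e_{m-1}(θ⁽ⁱ⁾) = e_{m-1}(θ)` is the product of the nonzero coordinates.
If `s > m - 1`, induction on `r < s` produces an `i` with `θᵢ ≠ 0` and `e_r(θ⁽ⁱ⁾) ≠ 0`: were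
`e_{r+1}(θ⁽ⁱ⁾) = 0` for all such `i`, the sum identity (whose other terms all equal `e_{r+1}(θ)`)
would force `e_{r+1}(θ) = 0` because `s ≠ r + 1`, and then the splitting would kill every
`e_r(θ⁽ⁱ⁾)` with `θᵢ ≠ 0`.
-/

open Finset MvPolynomial Function

namespace Multiset

variable {R : Type*} [CommSemiring R]

theorem esymm_cons_succ (a : R) (s : Multiset R) (n : ℕ) :
    (a ::ₘ s).esymm (n + 1) = s.esymm (n + 1) + a * s.esymm n := by
  simp only [esymm, powersetCard_cons, map_add, sum_add, map_map, comp_def, prod_cons,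
    sum_map_mul_left]

theorem esymm_zero_cons (s : Multiset R) (n : ℕ) : (0 ::ₘ s).esymm n = s.esymm n := by
  cases n with
  | zero => simp [esymm]
  | succ n => rw [esymm_cons_succ, zero_mul, add_zero]

end Multiset

namespace Finset

theorem val_map_eq_cons_erase {α β : Type*} [DecidableEq α] (f : α → β) {s : Finset α}
    {i : α} (hi : i ∈ s) : s.val.map f = f i ::ₘ (s.erase i).val.map f := by
  rw [erase_val, ← Multiset.map_cons, Multiset.cons_erase (mem_def.1 hi)]

theorem card_filter_ne_zero_le_iff_exists_card_eq {σ M : Type*} [Fintype σ] [Zero M]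
    [DecidableEq M] (θ : σ → M) {k : ℕ} (hk : k ≤ Fintype.card σ) :
    #{j | θ j ≠ 0} ≤ k ↔ ∃ S : Finset σ, #S = k ∧ ∀ i ∉ S, θ i = 0 := by
  constructor
  · intro h
    obtain ⟨S, hsub, -, hS⟩ := exists_subsuperset_card_eq (subset_univ _) h (by rwa [card_univ])
    exact ⟨S, hS, fun i hi => by_contra fun h0 => hi (hsub (by simpa using h0))⟩
  · rintro ⟨S, rfl, hS⟩
    exact card_le_card fun j hj => by_contra fun hjS => (mem_filter.1 hj).2 (hS j hjS)

end Finset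

namespace MvPolynomial

variable {σ R : Type*}

section CommSemiring

variable [CommSemiring R]

theorem isHomogeneous_esymm [Fintype σ] (n : ℕ) : (esymm σ R n).IsHomogeneous n := by
  refine IsHomogeneous.sum _ _ _ fun t ht => ?_
  simpa [(mem_powersetCard.1 ht).2] using
    IsHomogeneous.prod t (fun j => (X j : MvPolynomial σ R)) (fun _ => 1)
      fun j _ => isHomogeneous_X R j

theorem pderiv_multiset_esymm_eq_zero (i : σ) {s : Multiset (MvPolynomial σ R)}
    (hs : ∀ p ∈ s, pderiv i p = 0) (n : ℕ) : pderiv i (s.esymm n) = 0 := by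
  refine Multiset.sum_induction (fun q => pderiv i q = 0) _ (fun a b ha hb => by simp [ha, hb])
    (map_zero _) fun q hq => ?_
  obtain ⟨t, ht, rfl⟩ := Multiset.mem_map.1 hq
  refine Multiset.prod_induction (fun q => pderiv i q = 0) _
    (fun a b ha hb => by simp [ha, hb]) (pderiv i).map_one_eq_zero fun p hp => ?_
  exact hs p (Multiset.mem_of_le (Multiset.mem_powersetCard.1 ht).1 hp)

theorem eval_multiset_esymm_map_X (θ : σ → R) (s : Finset σ) (n : ℕ) :
    eval θ ((s.val.map X).esymm n) = (s.val.map θ).esymm n := by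
  simp [esymm_map_val, map_sum, map_prod]

variable [Fintype σ]

section Support

variable [DecidableEq R]

theorem eval_esymm_eq_zero_of_card_support_lt (θ : σ → R) {n : ℕ}
    (hn : #{j | θ j ≠ 0} < n) : eval θ (esymm σ R n) = 0 := by
  rw [esymm, map_sum]
  refine sum_eq_zero fun t ht => ?_
  obtain ⟨j, hjt, hj⟩ := not_subset.1 fun hsub =>
    (card_le_card hsub).not_gt ((mem_powersetCard.1 ht).2 ▸ hn)
  simp only [map_prod, eval_X]
  exact prod_eq_zero hjt (by simpa using hj)

theorem eval_esymm_card_support (θ : σ → R) :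
    eval θ (esymm σ R #{j | θ j ≠ 0}) = ∏ j ∈ {j | θ j ≠ 0}, θ j := by
  rw [esymm, map_sum, sum_eq_single_of_mem _ (mem_powersetCard.2 ⟨subset_univ _, rfl⟩)]
  · simp [map_prod]
  intro t ht hne
  obtain ⟨j, hjt, hj⟩ := not_subset.1 fun hsub =>
    hne (eq_of_subset_of_card_le hsub (mem_powersetCard.1 ht).2.ge)
  simp only [map_prod, eval_X]
  exact prod_eq_zero hjt (by simpa using hj)

end Support

variable [DecidableEq σ]

theorem eval_esymm_succ (θ : σ → R) (i : σ) (n : ℕ) :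
    eval θ (esymm σ R (n + 1)) =
      ((univ.erase i).val.map θ).esymm (n + 1) + θ i * ((univ.erase i).val.map θ).esymm n := by
  rw [esymm_eq_multiset_esymm, eval_multiset_esymm_map_X, val_map_eq_cons_erase _ (mem_univ i),
    Multiset.esymm_cons_succ]

theorem eval_update_zero_esymm (θ : σ → R) (i : σ) (n : ℕ) :
    eval (update θ i 0) (esymm σ R n) = ((univ.erase i).val.map θ).esymm n := by
  rw [esymm_eq_multiset_esymm, eval_multiset_esymm_map_X, val_map_eq_cons_erase _ (mem_univ i),
    update_self, Multiset.esymm_zero_cons]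
  congr 1
  exact Multiset.map_congr rfl fun j hj => update_of_ne (ne_of_mem_erase (s := univ) hj) 0 θ

theorem eval_esymm_succ_eq_eval_update_zero (θ : σ → R) (i : σ) (n : ℕ) :
    eval θ (esymm σ R (n + 1)) =
      eval (update θ i 0) (esymm σ R (n + 1)) + θ i * eval (update θ i 0) (esymm σ R n) := by
  rw [eval_esymm_succ θ i, eval_update_zero_esymm, eval_update_zero_esymm]

theorem eval_pderiv_esymm_succ (θ : σ → R) (i : σ) (n : ℕ) :
    eval θ (pderiv i (esymm σ R (n + 1))) = eval (update θ i 0) (esymm σ R n) := by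
  have hX : ∀ p ∈ (univ.erase i).val.map (X : σ → MvPolynomial σ R), pderiv i p = 0 := by
    simp only [Multiset.mem_map, mem_val, mem_erase]
    rintro _ ⟨j, ⟨hji, -⟩, rfl⟩
    exact pderiv_X_of_ne hji
  rw [eval_update_zero_esymm, esymm_eq_multiset_esymm, val_map_eq_cons_erase _ (mem_univ i),
    Multiset.esymm_cons_succ, map_add, pderiv_mul, pderiv_multiset_esymm_eq_zero i hX,
    pderiv_multiset_esymm_eq_zero i hX, pderiv_X_self, zero_add, one_mul, mul_zero, add_zero,
    eval_multiset_esymm_map_X]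

theorem sum_eval_update_zero_esymm_add (θ : σ → R) (n : ℕ) :
    ∑ i, eval (update θ i 0) (esymm σ R n) + n * eval θ (esymm σ R n) =
      Fintype.card σ * eval θ (esymm σ R n) := by
  cases n with
  | zero => simp [esymm_zero]
  | succ n =>
    have euler := congrArg (eval θ) (isHomogeneous_esymm (σ := σ) (R := R) (n + 1)).sum_X_mul_pderiv
    simp only [map_sum, map_mul, eval_X, eval_pderiv_esymm_succ, nsmul_eq_mul, map_natCast]
      at euler
    rw [← euler, ← sum_add_distrib]
    simp [← eval_esymm_succ_eq_eval_update_zero]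

theorem eval_update_zero_esymm_eq_zero_of_card_support_lt [DecidableEq R] (θ : σ → R) (i : σ)
    {n : ℕ} (hn : #{j | θ j ≠ 0} < n) : eval (update θ i 0) (esymm σ R n) = 0 := by
  refine eval_esymm_eq_zero_of_card_support_lt _ (lt_of_le_of_lt (card_le_card fun j => ?_) hn)
  simp only [mem_filter, mem_univ, true_and]
  exact mt fun hj => by simp [update_apply, hj]

end CommSemiring

section Domain

variable [CommRing R] [IsDomain R] [CharZero R] [DecidableEq R] [Fintype σ] [DecidableEq σ]

theorem exists_eval_update_zero_esymm_ne_zero_of_lt_card_support (θ : σ → R) :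
    ∀ n, n < #{j | θ j ≠ 0} → ∃ i, θ i ≠ 0 ∧ eval (update θ i 0) (esymm σ R n) ≠ 0
  | 0, hn => by
    obtain ⟨i, hi⟩ := card_pos.1 (Nat.zero_lt_of_lt hn)
    exact ⟨i, (mem_filter.1 hi).2, by simp [esymm_zero]⟩
  | n + 1, hn => by
    by_contra! h
    have hsum : ∑ i, eval (update θ i 0) (esymm σ R (n + 1)) =
        #{j | θ j = 0} * eval θ (esymm σ R (n + 1)) := by
      rw [← nsmul_eq_mul, ← sum_const, sum_filter]
      refine sum_congr rfl fun i _ => ?_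
      split_ifs with hi
      · rw [update_eq_self_iff.2 hi.symm]
      · exact h i hi
    have hE : eval θ (esymm σ R (n + 1)) = 0 := by
      by_contra hE
      have hcard : #{j | θ j = 0} + #{j | θ j ≠ 0} = Fintype.card σ :=
        card_filter_add_card_filter_not _
      have euler := sum_eval_update_zero_esymm_add θ (n + 1)
      rw [hsum, ← hcard] at euler
      have hcast : ((#{j | θ j = 0} + (n + 1) : ℕ) : R) =
          ((#{j | θ j = 0} + #{j | θ j ≠ 0} : ℕ) : R) :=
        mul_right_cancel₀ hE (by push_cast at euler ⊢; linear_combination euler)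
      exact absurd (Nat.cast_injective hcast) (by omega)
    obtain ⟨i, hi, hne⟩ := exists_eval_update_zero_esymm_ne_zero_of_lt_card_support θ n (by omega)
    have hsplit := eval_esymm_succ_eq_eval_update_zero θ i n
    rw [h i hi, zero_add, hE] at hsplit
    exact hne ((mul_eq_zero.1 hsplit.symm).resolve_left hi)

theorem exists_eval_update_zero_esymm_ne_zero (θ : σ → R) {n : ℕ} (hn : n ≤ #{j | θ j ≠ 0})
    (hnσ : n < Fintype.card σ) : ∃ i, eval (update θ i 0) (esymm σ R n) ≠ 0 := by
  obtain hlt | rfl := hn.lt_or_eq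
  · obtain ⟨i, -, hi⟩ := exists_eval_update_zero_esymm_ne_zero_of_lt_card_support θ n hlt
    exact ⟨i, hi⟩
  · obtain ⟨i, hi⟩ : ∃ i, θ i = 0 := by
      by_contra! h
      exact hnσ.not_ge (card_le_card fun j _ => by simp [h j])
    refine ⟨i, ?_⟩
    rw [update_eq_self_iff.2 hi.symm, eval_esymm_card_support, prod_ne_zero_iff]
    exact fun j hj => (mem_filter.1 hj).2

theorem forall_eval_pderiv_esymm_succ_eq_zero_iff (θ : σ → R) {n : ℕ}
    (hnσ : n < Fintype.card σ) :
    (∀ i, eval θ (pderiv i (esymm σ R (n + 1))) = 0) ↔ #{j | θ j ≠ 0} < n := by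
  simp only [eval_pderiv_esymm_succ]
  refine ⟨fun h => ?_, fun hn i => eval_update_zero_esymm_eq_zero_of_card_support_lt θ i hn⟩
  by_contra! hn
  obtain ⟨i, hi⟩ := exists_eval_update_zero_esymm_ne_zero θ hn hnσ
  exact hi (h i)

end Domain

end MvPolynomial

open MvPolynomial in
/-- For `2 ≤ m ≤ d`, all partial derivatives of the elementary symmetric polynomial `e_m`
vanish at a point `θ ∈ ℂ^d` if and only if `θ` has at most `m - 2` nonzero coordinates;
consequently, the common zero locus of the `d` partial derivatives of `e_m` is the union
of the coordinate subspaces spanned by `m - 2` of the standard basis vectors. -/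
theorem stmt11 {d m : ℕ} (hm : 2 ≤ m) (hmd : m ≤ d) :
    (∀ θ : Fin d → ℂ,
      (∀ i, eval θ (pderiv i (esymm (Fin d) ℂ m)) = 0) ↔
        {i | θ i ≠ 0}.ncard ≤ m - 2) ∧
    {θ : Fin d → ℂ | ∀ i, eval θ (pderiv i (esymm (Fin d) ℂ m)) = 0} =
      ⋃ (S : Finset (Fin d)) (_ : S.card = m - 2),
        {θ : Fin d → ℂ | ∀ i ∉ S, θ i = 0} := by
  have hncard (θ : Fin d → ℂ) : {i | θ i ≠ 0}.ncard = #{i | θ i ≠ 0} := by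
    rw [← Set.ncard_coe_finset, coe_filter]
    simp
  have hlocus (θ : Fin d → ℂ) :
      (∀ i, eval θ (pderiv i (esymm (Fin d) ℂ m)) = 0) ↔ {i | θ i ≠ 0}.ncard ≤ m - 2 := by
    obtain ⟨n, rfl⟩ : ∃ n, m = n + 1 := ⟨m - 1, by omega⟩
    rw [forall_eval_pderiv_esymm_succ_eq_zero_iff θ (by rwa [Fintype.card_fin]), hncard]
    omega
  refine ⟨hlocus, Set.ext fun θ => ?_⟩
  simp only [Set.mem_ofPred_eq, Set.mem_iUnion, exists_prop, hlocus, hncard]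
  exact card_filter_ne_zero_le_iff_exists_card_eq θ (by rw [Fintype.card_fin]; omega)
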